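/- arXiv:1003.4107 — 2 statements merged into one kernel-verified Lean document; each statement's English description precedes it below -/
import Mathlib

section
/- Let B > 0 and let X : [0,∞) → ℝ be a continuous function with X(0) ∈ [0,B]. Then the solution (W, L, U) of the two-sided Skorokhod problem on [0,B] is unique: if (W₁, L₁, U₁) and (W₂, L₂, U₂) both satisfy W = X + L − U, L and U continuous nondecreasing with L(0) = U(0) = 0, W(t) ∈ [0,B] for all t, and L (resp. U) increases only at times t with W(t) = 0 (resp. W(t) = B), then W₁ = W₂, L₁ = L₂ and U₁ = U₂. -/
/-!
Each of `L` and `U` is flat on a right neighbourhood of any time at which `W` is off the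
corresponding boundary. Where `W₁ > W₂`, `W₁` is off `0` and `W₂` is off `B`, so `W₁ - W₂`
can only decrease to the right; starting from `0` it therefore never becomes positive, and by
symmetry `W₁ = W₂`. Since `B > 0`, every time has `W` off at least one boundary, so
`L₁ - L₂ = U₁ - U₂` has right derivative `0` everywhere and vanishes identically.
-/

open Set

/-- `(W, L, U)` solves the two-sided Skorokhod problem on `[0, B]` for the path `X`
(all paths are considered on the time set `[0, ∞)`). -/
def TwoSidedSkorokhod (B : ℝ) (X W L U : ℝ → ℝ) : Prop :=
  ContinuousOn W (Ici 0) ∧ ContinuousOn L (Ici 0) ∧ ContinuousOn U (Ici 0) ∧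
  (∀ t ∈ Ici (0:ℝ), W t = X t + L t - U t) ∧
  L 0 = 0 ∧ U 0 = 0 ∧
  MonotoneOn L (Ici 0) ∧ MonotoneOn U (Ici 0) ∧
  (∀ t ∈ Ici (0:ℝ), W t ∈ Icc 0 B) ∧
  (∀ s ∈ Ici (0:ℝ), (∀ t, s < t → L s < L t) → W s = 0) ∧
  (∀ s ∈ Ici (0:ℝ), (∀ t, s < t → U s < U t) → W s = B)

open Filter Topology

theorem image_nonpos_of_eventually_le_of_pos {f : ℝ → ℝ} {a b : ℝ}
    (hf : ContinuousOn f (Icc a b)) (ha : f a ≤ 0)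
    (hloc : ∀ x ∈ Ico a b, 0 < f x → ∀ᶠ y in 𝓝[>] x, f y ≤ f x) :
    ∀ x ∈ Icc a b, f x ≤ 0 := by
  intro x hx
  refine le_of_forall_pos_le_add fun ε hε => ?_
  rw [zero_add]
  -- Fencing by the level `ε > 0` rather than `0`: at a touching point `f = ε` is positive.
  have hfence : Icc a b ⊆ {y | f y ≤ ε} := by
    refine IsClosed.Icc_subset_of_forall_mem_nhdsWithin ?_ (ha.trans hε.le) ?_
    · rw [inter_comm]
      exact hf.preimage_isClosed_of_isClosed isClosed_Icc isClosed_Iic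
    · rintro y ⟨hyε, hy⟩
      rcases (show f y ≤ ε from hyε).lt_or_eq with hlt | heq
      · have hcont := (hf y (Ico_subset_Icc_self hy)).mono_of_mem_nhdsWithin
          (Icc_mem_nhdsGT_of_mem hy)
        filter_upwards [hcont.eventually (Iic_mem_nhds hlt)] with z hz using hz
      · filter_upwards [hloc y hy (heq ▸ hε)] with z hz using heq ▸ hz
  exact hfence hx

theorem MonotoneOn.eventually_eq_of_not_forall_lt {L : ℝ → ℝ} {x : ℝ}
    (hL : MonotoneOn L (Ici 0)) (hx : 0 ≤ x) (h : ¬ ∀ t, x < t → L x < L t) :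
    ∀ᶠ y in 𝓝[≥] x, L y = L x := by
  push Not at h
  obtain ⟨t, hxt, hLt⟩ := h
  filter_upwards [Icc_mem_nhdsGE hxt] with y ⟨hxy, hyt⟩
  have h0y : 0 ≤ y := hx.trans hxy
  exact le_antisymm ((hL h0y (h0y.trans hyt) hyt).trans hLt) (hL hx h0y hxy)

namespace TwoSidedSkorokhod

variable {B : ℝ} {X W L U : ℝ → ℝ} {x : ℝ}

theorem W_eq (h : TwoSidedSkorokhod B X W L U) {t : ℝ} (ht : 0 ≤ t) :
    W t = X t + L t - U t :=
  h.2.2.2.1 t ht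

theorem W_mem_Icc (h : TwoSidedSkorokhod B X W L U) {t : ℝ} (ht : 0 ≤ t) : W t ∈ Icc 0 B :=
  h.2.2.2.2.2.2.2.2.1 t ht

theorem monotoneOn_L (h : TwoSidedSkorokhod B X W L U) : MonotoneOn L (Ici 0) :=
  h.2.2.2.2.2.2.1

theorem monotoneOn_U (h : TwoSidedSkorokhod B X W L U) : MonotoneOn U (Ici 0) :=
  h.2.2.2.2.2.2.2.1

theorem W_zero (h : TwoSidedSkorokhod B X W L U) : W 0 = X 0 := by
  obtain ⟨-, -, -, hW, hL0, hU0, -⟩ := h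
  rw [hW 0 self_mem_Ici, hL0, hU0, add_zero, sub_zero]

theorem eventually_L_eq (h : TwoSidedSkorokhod B X W L U) (hx : 0 ≤ x) (hW : W x ≠ 0) :
    ∀ᶠ y in 𝓝[≥] x, L y = L x := by
  obtain ⟨-, -, -, -, -, -, hLm, -, -, hLinc, -⟩ := h
  exact hLm.eventually_eq_of_not_forall_lt hx fun hinc => hW (hLinc x hx hinc)

theorem eventually_U_eq (h : TwoSidedSkorokhod B X W L U) (hx : 0 ≤ x) (hW : W x ≠ B) :
    ∀ᶠ y in 𝓝[≥] x, U y = U x := by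
  obtain ⟨-, -, -, -, -, -, -, hUm, -, -, hUinc⟩ := h
  exact hUm.eventually_eq_of_not_forall_lt hx fun hinc => hW (hUinc x hx hinc)

variable {W₁ L₁ U₁ W₂ L₂ U₂ : ℝ → ℝ} {t : ℝ}

theorem W_le (h₁ : TwoSidedSkorokhod B X W₁ L₁ U₁) (h₂ : TwoSidedSkorokhod B X W₂ L₂ U₂)
    (ht : 0 ≤ t) : W₁ t ≤ W₂ t := by
  suffices ∀ s ∈ Icc 0 t, W₁ s - W₂ s ≤ 0 from sub_nonpos.1 (this t ⟨ht, le_rfl⟩)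
  refine image_nonpos_of_eventually_le_of_pos ((h₁.1.sub h₂.1).mono Icc_subset_Ici_self)
    (by rw [h₁.W_zero, h₂.W_zero, sub_self]) ?_
  rintro x ⟨hx, -⟩ hpos
  have hW₁x : W₁ x ≠ 0 := ((h₂.W_mem_Icc hx).1.trans_lt (sub_pos.1 hpos)).ne'
  have hW₂x : W₂ x ≠ B := ((sub_pos.1 hpos).trans_le (h₁.W_mem_Icc hx).2).ne
  filter_upwards [nhdsWithin_mono x Ioi_subset_Ici_self (h₁.eventually_L_eq hx hW₁x),
    nhdsWithin_mono x Ioi_subset_Ici_self (h₂.eventually_U_eq hx hW₂x), self_mem_nhdsWithin]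
    with y hL₁ hU₂ hxy
  have hy : 0 ≤ y := hx.trans (le_of_lt hxy)
  have hL₂ := h₂.monotoneOn_L hx hy (le_of_lt hxy)
  have hU₁ := h₁.monotoneOn_U hx hy (le_of_lt hxy)
  linarith [h₁.W_eq hx, h₁.W_eq hy, h₂.W_eq hx, h₂.W_eq hy]

theorem L_eq_of_W_eq (hB : 0 < B) (h₁ : TwoSidedSkorokhod B X W₁ L₁ U₁)
    (h₂ : TwoSidedSkorokhod B X W₂ L₂ U₂) (hW : ∀ s ∈ Ici (0:ℝ), W₁ s = W₂ s) (ht : 0 ≤ t) :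
    L₁ t = L₂ t := by
  have hLU : ∀ y ∈ Ici (0:ℝ), L₁ y - L₂ y = U₁ y - U₂ y := fun y hy => by
    linarith [h₁.W_eq hy, h₂.W_eq hy, hW y hy]
  have hderiv : ∀ x ∈ Ico 0 t, HasDerivWithinAt (fun y => L₁ y - L₂ y) 0 (Ici x) x := by
    rintro x ⟨hx, -⟩
    refine (hasDerivWithinAt_const x _ (L₁ x - L₂ x)).congr_of_eventuallyEq ?_ rfl
    by_cases hW0 : W₁ x = 0
    · have hWB : W₁ x ≠ B := hW0 ▸ hB.ne
      filter_upwards [h₁.eventually_U_eq hx hWB, h₂.eventually_U_eq hx (hW x hx ▸ hWB),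
        self_mem_nhdsWithin] with y hU₁ hU₂ hxy
      rw [hLU y (hx.trans hxy), hLU x hx, hU₁, hU₂]
    · filter_upwards [h₁.eventually_L_eq hx hW0, h₂.eventually_L_eq hx (hW x hx ▸ hW0)]
        with y hL₁ hL₂
      rw [hL₁, hL₂]
  obtain ⟨-, hL₁c, -, -, hL₁0, -⟩ := h₁
  obtain ⟨-, hL₂c, -, -, hL₂0, -⟩ := h₂
  have hconst := constant_of_has_deriv_right_zero ((hL₁c.sub hL₂c).mono Icc_subset_Ici_self)
    hderiv t ⟨ht, le_rfl⟩
  rwa [Pi.sub_apply, Pi.sub_apply, hL₁0, hL₂0, sub_self, sub_eq_zero] at hconst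

end TwoSidedSkorokhod

theorem skorokhod_unique_general (B : ℝ) (hB : 0 < B) (X : ℝ → ℝ)
    (W₁ L₁ U₁ W₂ L₂ U₂ : ℝ → ℝ)
    (h₁ : TwoSidedSkorokhod B X W₁ L₁ U₁)
    (h₂ : TwoSidedSkorokhod B X W₂ L₂ U₂) :
    (∀ t ∈ Ici (0:ℝ), W₁ t = W₂ t) ∧
    (∀ t ∈ Ici (0:ℝ), L₁ t = L₂ t) ∧
    (∀ t ∈ Ici (0:ℝ), U₁ t = U₂ t) := by
  have hW : ∀ t ∈ Ici (0:ℝ), W₁ t = W₂ t := fun t ht =>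
    (h₁.W_le h₂ ht).antisymm (h₂.W_le h₁ ht)
  have hL : ∀ t ∈ Ici (0:ℝ), L₁ t = L₂ t := fun t ht => h₁.L_eq_of_W_eq hB h₂ hW ht
  refine ⟨hW, hL, fun t ht => ?_⟩
  linarith [h₁.W_eq ht, h₂.W_eq ht, hW t ht, hL t ht]

/-- Uniqueness of the solution of the two-sided Skorokhod problem. -/
theorem skorokhod_unique (B : ℝ) (hB : 0 < B) (X : ℝ → ℝ)
    (hX : ContinuousOn X (Ici 0)) (hX0 : X 0 ∈ Icc 0 B)
    (W₁ L₁ U₁ W₂ L₂ U₂ : ℝ → ℝ)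
    (h₁ : TwoSidedSkorokhod B X W₁ L₁ U₁)
    (h₂ : TwoSidedSkorokhod B X W₂ L₂ U₂) :
    (∀ t ∈ Ici (0:ℝ), W₁ t = W₂ t) ∧
    (∀ t ∈ Ici (0:ℝ), L₁ t = L₂ t) ∧
    (∀ t ∈ Ici (0:ℝ), U₁ t = U₂ t) :=
  skorokhod_unique_general B hB X W₁ L₁ U₁ W₂ L₂ U₂ h₁ h₂
end

section
/- Let μ ∈ ℝ, q > 0, B > 0, γ = √(μ²+2q), and α ∈ ℝ with γ·coth(Bγ) ≠ μ + α. Then setting Λ⁺ = μ − γ and Λ⁻ = −μ − γ, the scalar expression (e^{−BΛ⁻} − e^{BΛ⁺})·((Λ⁻−α)⁻¹·e^{−BΛ⁻} + (Λ⁺+α)⁻¹·e^{BΛ⁺})⁻¹ equals 2·((1/2)α² + μα − q)/(γ·coth(Bγ) − (μ+α)). -/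
/-!
With `E = exp (Bμ)` and `x = Bγ` the two exponentials are `E eˣ` and `E e⁻ˣ`, so `E` cancels,
the numerator is `2 E sinh x`, and the bracket is
`E · 2 (γ cosh x - (μ+α) sinh x) / ((μ+α)² - γ²)`.
Since `γ² = μ² + 2q`, the product `(Λ⁻ - α)(Λ⁺ + α) = γ² - (μ+α)²` equals `-2(½α² + μα - q)`.
-/

open Real

noncomputable def coth (x : ℝ) : ℝ := Real.cosh x / Real.sinh x

lemma inv_mul_exp_add_inv_mul_exp_neg (x a γ : ℝ) (h₁ : -a - γ ≠ 0) (h₂ : a - γ ≠ 0) :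
    (-a - γ)⁻¹ * exp x + (a - γ)⁻¹ * exp (-x) =
      2 * (γ * cosh x - a * sinh x) / (a ^ 2 - γ ^ 2) := by
  have h : a ^ 2 - γ ^ 2 = -((-a - γ) * (a - γ)) := by ring
  rw [cosh_eq, sinh_eq, h]
  field_simp
  ring

lemma exp_add_sub_exp_sub_mul_inv (y x a γ : ℝ) (h₁ : -a - γ ≠ 0) (h₂ : a - γ ≠ 0) :
    (exp (y + x) - exp (y - x)) *
        ((-a - γ)⁻¹ * exp (y + x) + (a - γ)⁻¹ * exp (y - x))⁻¹ =
      (a ^ 2 - γ ^ 2) * sinh x / (γ * cosh x - a * sinh x) := by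
  have hsum : (-a - γ)⁻¹ * exp (y + x) + (a - γ)⁻¹ * exp (y - x) =
      exp y * ((-a - γ)⁻¹ * exp x + (a - γ)⁻¹ * exp (-x)) := by
    rw [sub_eq_add_neg y x, exp_add, exp_add]; ring
  have hdiff : exp (y + x) - exp (y - x) = exp y * (2 * sinh x) := by
    rw [sinh_eq, sub_eq_add_neg y, exp_add, exp_add]; ring
  rw [hsum, hdiff, inv_mul_exp_add_inv_mul_exp_neg x a γ h₁ h₂, mul_inv, inv_div,
    mul_mul_mul_comm, mul_inv_cancel₀ (exp_pos y).ne', one_mul]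
  field_simp

lemma mul_coth_sub_eq_div {x : ℝ} (hx : sinh x ≠ 0) (γ a : ℝ) :
    γ * coth x - a = (γ * cosh x - a * sinh x) / sinh x := by
  rw [coth]
  field_simp

theorem scalar_exponent_evaluation_general (μ q B α : ℝ) (hq : 0 < q) (hB : 0 < B)
    (γ : ℝ) (hγ : γ = Real.sqrt (μ ^ 2 + 2 * q))
    (hm : -μ - γ ≠ α) (hp : μ - γ ≠ -α) :
    (Real.exp (-B * (-μ - γ)) - Real.exp (B * (μ - γ))) *
        ((-μ - γ - α)⁻¹ * Real.exp (-B * (-μ - γ)) +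
          (μ - γ + α)⁻¹ * Real.exp (B * (μ - γ)))⁻¹ =
      2 * ((1/2) * α ^ 2 + μ * α - q) / (γ * coth (B * γ) - (μ + α)) := by
  have hγ2 : γ ^ 2 = μ ^ 2 + 2 * q := by
    rw [hγ]; exact sq_sqrt (by positivity)
  have hγpos : 0 < γ := by
    rw [hγ]; exact sqrt_pos.mpr (by positivity)
  have hsinh : sinh (B * γ) ≠ 0 := (sinh_pos_iff.mpr (by positivity)).ne'
  have h₁ : -(μ + α) - γ ≠ 0 := by intro h; exact hm (by linarith)
  have h₂ : μ + α - γ ≠ 0 := by intro h; exact hp (by linarith)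
  rw [show -B * (-μ - γ) = B * μ + B * γ by ring, show B * (μ - γ) = B * μ - B * γ by ring,
    show -μ - γ - α = -(μ + α) - γ by ring, show μ - γ + α = μ + α - γ by ring,
    exp_add_sub_exp_sub_mul_inv _ _ _ _ h₁ h₂, mul_coth_sub_eq_div hsinh, div_div_eq_mul_div,
    show (μ + α) ^ 2 - γ ^ 2 = 2 * ((1/2) * α ^ 2 + μ * α - q) by rw [hγ2]; ring]

/-- Scalar evaluation of the inverse-local-time exponent `F^L(α, q)` for a Brownian motion
with drift `μ`, variance 1, reflected in `[0, B]`: with `Λ⁺ = μ - γ`, `Λ⁻ = -μ - γ`,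
`(e^{-BΛ⁻} - e^{BΛ⁺})((Λ⁻-α)⁻¹e^{-BΛ⁻} + (Λ⁺+α)⁻¹e^{BΛ⁺})⁻¹
  = 2(½α² + μα - q)/(γ coth(Bγ) - (μ+α))`. -/
theorem scalar_exponent_evaluation (μ q B α : ℝ) (hq : 0 < q) (hB : 0 < B)
    (γ : ℝ) (hγ : γ = Real.sqrt (μ ^ 2 + 2 * q))
    (hden : γ * coth (B * γ) ≠ μ + α)
    (hm : -μ - γ ≠ α) (hp : μ - γ ≠ -α) :
    (Real.exp (-B * (-μ - γ)) - Real.exp (B * (μ - γ))) *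
        ((-μ - γ - α)⁻¹ * Real.exp (-B * (-μ - γ)) +
          (μ - γ + α)⁻¹ * Real.exp (B * (μ - γ)))⁻¹ =
      2 * ((1/2) * α ^ 2 + μ * α - q) / (γ * coth (B * γ) - (μ + α)) :=
  scalar_exponent_evaluation_general μ q B α hq hB γ hγ hm hp
end
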